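/- arXiv:2105.14604 — 2 statements merged into one kernel-verified Lean document; each statement's English description precedes it below -/
import Mathlib

section
/- The map Γ is a bijection from the large maps Hom^L(ℕ,ℕ̂) onto the set Mon(x_ℕ) of all monomials, the map Λ is a bijection from the small maps Hom_S(ℕ,ℕ̂) onto Mon(x_ℕ), and the triangle with the duality D commutes: for every small map f one has Λf = Γ(Df), and equivalently for every large map g one has Γg = Λ(Dg). -/
/-!
Encoding conventions (used throughout):
* The paper's positive integers `ℕ = {1,2,…}` are encoded by Lean's `ℕ = {0,1,2,…}`
  via the order isomorphism `n ↦ n - 1`, in both the domain and the finite part of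
  the codomain `ℕ̂ = ℕ ∪ {∞}`, the latter encoded as `ℕ∞`.  Under this shift the
  duality `D` is given by the same formula `Df(p) = min { q | f(q) > p }`.
* Variables `x_1, x_2, …` are indexed by Lean's `0, 1, 2, …`; monomials are
  finitely supported functions `ℕ → ℕ` (exponent vectors); exponents are unshifted.
-/

noncomputable section

/-- Maps `ℕ → ℕ̂`. -/
abbrev NNhat := ℕ → ℕ∞

/-- SmallMap maps: all values bounded by some natural number. -/
def SmallMap (f : NNhat) : Prop := ∃ N : ℕ, ∀ n, f n ≤ (N : ℕ∞)

/-- LargeMap maps: some value equals `∞`. -/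
def LargeMap (f : NNhat) : Prop := ∃ n, f n = ⊤

/-- Maps with all values finite and unbounded image. -/
def UnbFinMap (f : NNhat) : Prop := (∀ n, f n ≠ ⊤) ∧ ∀ N : ℕ, ∃ n, (N : ℕ∞) < f n

/-- The duality `D`: `Df(p) = min { q : f(q) > p }`, the min of the empty set being `∞`. -/
def Ddual (f : NNhat) : NNhat := fun p =>
  sInf ((fun q : ℕ => (q : ℕ∞)) '' {q : ℕ | (p : ℕ∞) < f q})

/-- The poset `Hom(ℕ, ℕ̂)` of monotone maps, ordered pointwise. -/
abbrev HomNN := {f : NNhat // Monotone f}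

/-- The topology on `Hom(ℕ, ℕ̂)` with basis the intervals `U(f̲, f̄)` with `f̲` small
and `f̄` large. -/
instance (priority := 10000) : TopologicalSpace HomNN :=
  TopologicalSpace.generateFrom
    {S | ∃ a b : HomNN, SmallMap a.1 ∧ LargeMap b.1 ∧ S = {f : HomNN | a ≤ f ∧ f ≤ b}}

/-- Monomials: finitely supported functions `ℕ → ℕ` (exponent vectors). -/
def Mon : Set (ℕ → ℕ) := {u | (Function.support u).Finite}

/-- `Γ f = ∏_{f(i) < ∞} x_{f(i)}` : the exponent of `x_j` is `#{i | f(i) = j}`. -/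
def Gmap (f : NNhat) : ℕ → ℕ := fun j => Nat.card {i : ℕ // f i = (j : ℕ∞)}

/-- `Λ f = ∏_{i ≥ 1} x_i^{f(i) - f(i-1)}` (with the convention `f(0) = 1`, i.e. the
shifted convention `f(-1) = 0`). -/
def Lmap (f : NNhat) : ℕ → ℕ := fun i =>
  match i with
  | 0 => (f 0).toNat
  | k + 1 => (f (k + 1)).toNat - (f k).toNat

/-- The exponent vector of the variable `x_i`. -/
def xvar (i : ℕ) : ℕ → ℕ := fun k => if k = i then 1 else 0

/-- One generating step of the strongly stable order: `stStep a b` means `a ≥_st b`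
by one of the defining relations `x_i·w ≥_st x_j·w` (`i ≤ j`) or `x_i·b ≥_st b`. -/
def stStep (a b : ℕ → ℕ) : Prop :=
  (∃ i j w, i ≤ j ∧ a = w + xvar i ∧ b = w + xvar j) ∨ (∃ i, a = b + xvar i)

/-- The strongly stable order: `stGE u v` means `u ≥_st v`. -/
def stGE (u v : ℕ → ℕ) : Prop := Relation.ReflTransGen stStep u v

/-- A strongly stable ideal: a set of monomials upward closed under `≥_st`. -/
def IsSStableIdeal (I : Set (ℕ → ℕ)) : Prop :=
  I ⊆ Mon ∧ ∀ u ∈ I, ∀ v, stGE v u → v ∈ I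

/-- The smallest strongly stable ideal containing the set `G` of monomials. -/
def sstSpan (G : Set (ℕ → ℕ)) : Set (ℕ → ℕ) := {v | ∃ u ∈ G, stGE v u}

/-- `Γ(ℐ^L)`: the set of monomials `Γ f` for `f` large in `ℐ`. -/
def GammaIdeal (ℐ : Set HomNN) : Set (ℕ → ℕ) :=
  {u | ∃ f ∈ ℐ, LargeMap f.1 ∧ u = Gmap f.1}

/-- `Λ(ℱ_S)`: the set of monomials `Λ f` for `f` small in `ℱ`. -/
def LambdaIdeal (ℱ : Set HomNN) : Set (ℕ → ℕ) :=
  {u | ∃ f ∈ ℱ, SmallMap f.1 ∧ u = Lmap f.1}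

/-- `I` is a dualizable strongly stable ideal with dual strongly stable ideal `J`:
the open poset ideal `ℐ` corresponding to `I` is regular open, and `J` is obtained
from the interior `ℱ` of the complement of `ℐ` as `Λ(ℱ_S)`. -/
def IsDualPair (I J : Set (ℕ → ℕ)) : Prop :=
  ∃ ℐ : Set HomNN, IsOpen ℐ ∧ IsLowerSet ℐ ∧ ℐ = interior (closure ℐ) ∧
    GammaIdeal ℐ = I ∧ LambdaIdeal (interior ℐᶜ) = J

/-- Strict lexicographic order `f ≻_lex g`: at the least index where they differ,
`f` is larger. -/
def lexGT (f g : NNhat) : Prop := ∃ r, (∀ i < r, f i = g i) ∧ g r < f r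

/-- `f ⪰_lex g`. -/
def lexGE (f g : NNhat) : Prop := f = g ∨ lexGT f g

/-- The single monomial `x_{i+1}^e` (Lean variable index `i`). -/
def singleMon (i e : ℕ) : ℕ → ℕ := fun j => if j = i then e else 0

end

noncomputable section

-- auxiliary

def Linv (u : ℕ → ℕ) : NNhat := fun n => ((∑ k ∈ Finset.range (n+1), u k : ℕ) : ℕ∞)

lemma ddual_monotone (f : NNhat) : Monotone (Ddual f) := by
  intro p p' hpp
  apply sInf_le_sInf
  apply Set.image_mono
  intro q hq
  exact lt_of_le_of_lt (by exact_mod_cast hpp : (p:ℕ∞) ≤ (p':ℕ∞)) hq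

lemma ddual_small_of_large {f : NNhat} (hg : LargeMap f) : SmallMap (Ddual f) := by
  obtain ⟨n, hn⟩ := hg
  exact ⟨n, fun p => sInf_le ⟨n, by simp [Set.mem_setOf_eq, hn], rfl⟩⟩

lemma ddual_large_of_small {f : NNhat} (hf : SmallMap f) : LargeMap (Ddual f) := by
  obtain ⟨N, hN⟩ := hf
  refine ⟨N, ?_⟩
  have h : {q : ℕ | (N:ℕ∞) < f q} = ∅ := by
    ext q; simp [not_lt.2 (hN q)]
  simp [Ddual, h]

lemma ddual_eq_sInf {f : NNhat} (p : ℕ) (h : {q : ℕ | (p:ℕ∞) < f q}.Nonempty) :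
    Ddual f p = ((sInf {q : ℕ | (p:ℕ∞) < f q} : ℕ) : ℕ∞) := by
  apply le_antisymm
  · exact sInf_le ⟨_, Nat.sInf_mem h, rfl⟩
  · apply le_sInf
    rintro x ⟨q, hq, rfl⟩
    show ((sInf {q : ℕ | (p:ℕ∞) < f q} : ℕ) : ℕ∞) ≤ (q : ℕ∞)
    exact_mod_cast Nat.sInf_le hq

lemma lt_ddual_iff {f : NNhat} (hf : Monotone f) (n p : ℕ) :
    (n:ℕ∞) < Ddual f p ↔ f n ≤ (p:ℕ∞) := by
  by_cases h : {q : ℕ | (p:ℕ∞) < f q}.Nonempty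
  · rw [ddual_eq_sInf p h, Nat.cast_lt]
    constructor
    · intro hn
      by_contra hc
      push_neg at hc
      exact absurd (Nat.sInf_le (Set.mem_setOf.2 hc)) (not_le.2 hn)
    · intro hn
      rcases lt_or_ge n (sInf {q : ℕ | (p:ℕ∞) < f q}) with h' | h'
      · exact h'
      · have hmem : (p:ℕ∞) < f (sInf {q : ℕ | (p:ℕ∞) < f q}) := Nat.sInf_mem h
        exact absurd (lt_of_lt_of_le hmem (hf h')) (not_lt.2 hn)
  · have he : {q : ℕ | (p:ℕ∞) < f q} = ∅ := Set.not_nonempty_iff_eq_empty.mp h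
    have hfn : f n ≤ (p:ℕ∞) := not_lt.1 (fun hc => h ⟨n, hc⟩)
    simp [Ddual, he, hfn]

lemma ddual_ddual {f : NNhat} (hf : Monotone f) : Ddual (Ddual f) = f := by
  funext n
  have hset : {p : ℕ | (n:ℕ∞) < Ddual f p} = {p : ℕ | f n ≤ (p:ℕ∞)} := by
    ext p; exact lt_ddual_iff hf n p
  show sInf ((fun q : ℕ => (q : ℕ∞)) '' {p : ℕ | (n:ℕ∞) < Ddual f p}) = f n
  rw [hset]
  cases hfn : f n with
  | top =>
    have : {p : ℕ | f n ≤ (p:ℕ∞)} = ∅ := by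
      ext p; simp [hfn]
    simp [this]
  | coe k =>
    have hs : {p : ℕ | ((k:ℕ):ℕ∞) ≤ (p:ℕ∞)} = {p : ℕ | k ≤ p} := by
      ext p; rw [Set.mem_setOf_eq, Set.mem_setOf_eq, Nat.cast_le]
    rw [hs]
    apply le_antisymm
    · exact sInf_le ⟨k, le_refl k, rfl⟩
    · apply le_sInf
      rintro x ⟨q, hq, rfl⟩
      show ((k:ℕ):ℕ∞) ≤ (q : ℕ∞)
      exact_mod_cast (show k ≤ q from hq)

lemma gmap_eq {g : NNhat} (hg : Monotone g) (hl : LargeMap g) :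
    Gmap g = Lmap (Ddual g) := by
  obtain ⟨n₀, hn₀⟩ := hl
  have hne : ∀ p : ℕ, {q : ℕ | (p:ℕ∞) < g q}.Nonempty := by
    intro p
    exact ⟨n₀, by simp [Set.mem_setOf_eq, hn₀]⟩
  set m : ℕ → ℕ := fun p => sInf {q : ℕ | (p:ℕ∞) < g q} with hm
  have hd : ∀ p, Ddual g p = (m p : ℕ∞) := fun p => ddual_eq_sInf p (hne p)
  have hkey : ∀ (p i : ℕ), g i ≤ (p:ℕ∞) ↔ i < m p := by
    intro p i
    rw [← lt_ddual_iff hg, hd p, Nat.cast_lt]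
  have hmono : ∀ k, m k ≤ m (k+1) := by
    intro k
    have := ddual_monotone g (Nat.le_succ k)
    rw [hd, hd, Nat.cast_le] at this
    exact this
  funext j
  cases j with
  | zero =>
    have hset : {i : ℕ | g i = ((0:ℕ):ℕ∞)} = ↑(Finset.Iio (m 0)) := by
      ext i
      simp only [Set.mem_setOf_eq, Finset.coe_Iio, Set.mem_Iio]
      rw [← hkey 0 i, Nat.cast_zero]
      exact ⟨le_of_eq, fun h => le_antisymm h zero_le⟩
    show Nat.card {i : ℕ // g i = ((0:ℕ):ℕ∞)} = (Ddual g 0).toNat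
    rw [hd, ENat.toNat_coe]
    have hc : Nat.card {i : ℕ // g i = ((0:ℕ):ℕ∞)} = Set.ncard {i : ℕ | g i = ((0:ℕ):ℕ∞)} :=
      Nat.card_coe_set_eq _
    rw [hc, hset, Set.ncard_coe_finset, Nat.card_Iio]
  | succ k =>
    have hset : {i : ℕ | g i = ((k+1:ℕ):ℕ∞)} = ↑(Finset.Ico (m k) (m (k+1))) := by
      ext i
      simp only [Set.mem_setOf_eq, Finset.coe_Ico, Set.mem_Ico]
      rw [← hkey (k+1) i, ← not_lt, ← hkey k i, not_le]
      constructor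
      · intro h
        rw [h]
        refine ⟨?_, le_refl _⟩
        exact_mod_cast Nat.lt_succ_self k
      · rintro ⟨h1, h2⟩
        have hne' : g i ≠ ⊤ := by
          intro ht
          rw [ht, top_le_iff] at h2
          exact ENat.coe_ne_top (k+1) h2
        obtain ⟨n, hn⟩ : ∃ n : ℕ, g i = (n : ℕ∞) := ⟨(g i).toNat, (ENat.coe_toNat hne').symm⟩
        rw [hn] at h1 h2 ⊢
        rw [Nat.cast_lt] at h1
        rw [Nat.cast_le] at h2
        exact_mod_cast (by omega : n = k+1)
    show Nat.card {i : ℕ // g i = ((k+1:ℕ):ℕ∞)} = (Ddual g (k+1)).toNat - (Ddual g k).toNat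
    rw [hd (k+1), hd k, ENat.toNat_coe, ENat.toNat_coe]
    have hc : Nat.card {i : ℕ // g i = ((k+1:ℕ):ℕ∞)} = Set.ncard {i : ℕ | g i = ((k+1:ℕ):ℕ∞)} :=
      Nat.card_coe_set_eq _
    rw [hc, hset, Set.ncard_coe_finset, Nat.card_Ico]

lemma lmap_small_sum {f : NNhat} (hf : Monotone f) (hs : SmallMap f) :
    ∀ n, ∑ k ∈ Finset.range (n+1), Lmap f k = (f n).toNat := by
  obtain ⟨N, hN⟩ := hs
  have hfin : ∀ n, f n ≠ ⊤ := fun n => ((hN n).trans_lt (by simp)).ne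
  intro n
  induction n with
  | zero => simp [Lmap]
  | succ k ih =>
    rw [Finset.sum_range_succ, ih]
    have h1 : (f k).toNat ≤ (f (k+1)).toNat :=
      ENat.toNat_le_toNat (hf (Nat.le_succ k)) (hfin (k+1))
    show (f k).toNat + ((f (k+1)).toNat - (f k).toNat) = (f (k+1)).toNat
    omega

lemma lmap_mapsTo : Set.MapsTo Lmap {f : NNhat | Monotone f ∧ SmallMap f} Mon := by
  rintro f ⟨hf, hs⟩
  obtain ⟨N, hN⟩ := hs
  show (Function.support (Lmap f)).Finite
  by_contra hinf
  obtain ⟨t, hts, htc⟩ := Set.Infinite.exists_subset_card_eq hinf (N+1)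
  set M := t.sup id with hM
  have htr : t ⊆ Finset.range (M+1) := by
    intro i hi
    rw [Finset.mem_range]
    exact Nat.lt_succ_of_le (Finset.le_sup (f := id) hi)
  have h1 : t.card ≤ ∑ k ∈ t, Lmap f k := by
    rw [Finset.card_eq_sum_ones]
    apply Finset.sum_le_sum
    intro i hi
    exact Nat.one_le_iff_ne_zero.2 (hts hi)
  have h2 : ∑ k ∈ t, Lmap f k ≤ ∑ k ∈ Finset.range (M+1), Lmap f k :=
    Finset.sum_le_sum_of_subset htr
  have h3 : ∑ k ∈ Finset.range (M+1), Lmap f k = (f M).toNat :=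
    lmap_small_sum hf ⟨N, hN⟩ M
  have h4 : (f M).toNat ≤ N := by
    have := ENat.toNat_le_toNat (hN M) (by simp)
    simpa using this
  omega

lemma linv_mapsTo : Set.MapsTo Linv Mon {f : NNhat | Monotone f ∧ SmallMap f} := by
  intro u hu
  constructor
  · intro n n' hnn
    apply Nat.cast_le.2
    exact Finset.sum_le_sum_of_subset (Finset.range_subset_range.2 (by omega))
  · refine ⟨∑ k ∈ hu.toFinset, u k, fun n => ?_⟩
    apply Nat.cast_le.2
    calc ∑ k ∈ Finset.range (n+1), u k
        = ∑ k ∈ (Finset.range (n+1)).filter (fun k => u k ≠ 0), u k :=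
          (Finset.sum_filter_ne_zero _).symm
      _ ≤ ∑ k ∈ hu.toFinset, u k := by
          apply Finset.sum_le_sum_of_subset
          intro k hk
          apply (Set.Finite.mem_toFinset (hs := hu)).2
          exact (Finset.mem_filter.1 hk).2

lemma linv_lmap {f : NNhat} (hf : Monotone f) (hs : SmallMap f) : Linv (Lmap f) = f := by
  obtain ⟨N, hN⟩ := hs
  have hfin : ∀ n, f n ≠ ⊤ := fun n => ((hN n).trans_lt (by simp)).ne
  funext n
  show ((∑ k ∈ Finset.range (n+1), Lmap f k : ℕ) : ℕ∞) = f n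
  rw [lmap_small_sum hf ⟨N, hN⟩ n, ENat.coe_toNat (hfin n)]

lemma lmap_linv (u : ℕ → ℕ) : Lmap (Linv u) = u := by
  funext n
  cases n with
  | zero =>
    show (Linv u 0).toNat = u 0
    simp [Linv]
  | succ k =>
    show (Linv u (k+1)).toNat - (Linv u k).toNat = u (k+1)
    simp only [Linv, ENat.toNat_coe]
    rw [Finset.sum_range_succ (n := k+1)]
    omega

lemma lmap_bijOn : Set.BijOn Lmap {f : NNhat | Monotone f ∧ SmallMap f} Mon := by
  have hinv : Set.InvOn Linv Lmap {f : NNhat | Monotone f ∧ SmallMap f} Mon := by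
    constructor
    · rintro f ⟨hf, hs⟩
      exact linv_lmap hf hs
    · intro u _
      exact lmap_linv u
  exact hinv.bijOn lmap_mapsTo linv_mapsTo

lemma ddual_bijOn :
    Set.BijOn Ddual {f : NNhat | Monotone f ∧ LargeMap f} {f : NNhat | Monotone f ∧ SmallMap f} := by
  have hinv : Set.InvOn Ddual Ddual {f : NNhat | Monotone f ∧ LargeMap f}
      {f : NNhat | Monotone f ∧ SmallMap f} := by
    constructor
    · rintro f ⟨hf, _⟩
      exact ddual_ddual hf
    · rintro f ⟨hf, _⟩
      exact ddual_ddual hf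
  refine hinv.bijOn ?_ ?_
  · rintro f ⟨hf, hl⟩
    exact ⟨ddual_monotone f, ddual_small_of_large hl⟩
  · rintro f ⟨hf, hs⟩
    exact ⟨ddual_monotone f, ddual_large_of_small hs⟩

/-- `Γ` is a bijection from the large monotone maps onto the set of
monomials, `Λ` is a bijection from the small monotone maps onto the set of monomials,
and the triangle with `D` commutes: `Λ f = Γ (D f)` for `f` small,
`Γ g = Λ (D g)` for `g` large. -/
theorem stmt3 :
    Set.BijOn Gmap {f : NNhat | Monotone f ∧ LargeMap f} Mon ∧
    Set.BijOn Lmap {f : NNhat | Monotone f ∧ SmallMap f} Mon ∧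
    (∀ f : NNhat, Monotone f → SmallMap f → Lmap f = Gmap (Ddual f)) ∧
    (∀ g : NNhat, Monotone g → LargeMap g → Gmap g = Lmap (Ddual g)) := by
  refine ⟨?_, lmap_bijOn, ?_, fun g hg hl => gmap_eq hg hl⟩
  · have h := lmap_bijOn.comp ddual_bijOn
    apply h.congr
    rintro f ⟨hf, hl⟩
    exact (gmap_eq hf hl).symm
  · intro f hf hs
    have h := gmap_eq (ddual_monotone f) (ddual_large_of_small hs)
    rw [h, ddual_ddual hf]


end
end

section
/- Let ℐ be an open poset ideal of Hom(ℕ,ℕ̂). Then ℐ is also closed (hence clopen) if and only if the corresponding strongly stable ideal Γ(ℐ^L) is finitely generated, i.e. there is a finite set M of monomials with Γ(ℐ^L) = { v : v ≥_st u for some u ∈ M }. -/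
noncomputable section

open Finset in
/-- Prefix sums of exponent vectors. -/
def Pf (u : ℕ → ℕ) (j : ℕ) : ℕ := ∑ k ∈ Finset.range (j+1), u k

lemma Pf_mono (u : ℕ → ℕ) {j j' : ℕ} (h : j ≤ j') : Pf u j ≤ Pf u j' :=
  Finset.sum_le_sum_of_subset (Finset.range_subset_range.2 (Nat.succ_le_succ h))

lemma Pf_add (w x : ℕ → ℕ) (j : ℕ) : Pf (w + x) j = Pf w j + Pf x j := by
  simp [Pf, Finset.sum_add_distrib]

lemma Pf_xvar (i j : ℕ) : Pf (xvar i) j = if i ≤ j then 1 else 0 := by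
  simp only [Pf, xvar]
  rw [Finset.sum_ite_eq' (Finset.range (j+1)) i (fun _ => 1)]
  simp [Nat.lt_succ_iff]

lemma Pf_stab {u : ℕ → ℕ} {m : ℕ} (h : ∀ k, m < k → u k = 0) {j : ℕ} (hj : m ≤ j) :
    Pf u j = Pf u m := by
  refine (Finset.sum_subset (Finset.range_subset_range.2 (Nat.succ_le_succ hj)) ?_).symm
  intro k _ hk
  exact h k (by simpa [Nat.lt_succ_iff] using hk)

lemma stStep_Pf {a b : ℕ → ℕ} (h : stStep a b) (j : ℕ) : Pf b j ≤ Pf a j := by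
  rcases h with ⟨i, i', w, hii', rfl, rfl⟩ | ⟨i, rfl⟩
  · rw [Pf_add, Pf_add, Pf_xvar, Pf_xvar]
    gcongr
    split <;> split <;> omega
  · rw [Pf_add]; exact Nat.le_add_right _ _

lemma stGE_Pf {u v : ℕ → ℕ} (h : stGE u v) (j : ℕ) : Pf v j ≤ Pf u j := by
  induction h with
  | refl => exact le_rfl
  | tail _ hstep ih => exact le_trans (stStep_Pf hstep j) ih

lemma mon_of_stStep {a b : ℕ → ℕ} (h : stStep a b) (hb : b ∈ Mon) : a ∈ Mon := by
  rcases h with ⟨i, i', w, _, rfl, rfl⟩ | ⟨i, rfl⟩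
  · have hw : Function.support w ⊆ Function.support (w + xvar i') := by
      intro k hk
      simp only [Function.mem_support] at hk ⊢
      simp only [Pi.add_apply]
      omega
    refine Set.Finite.subset ((hb.subset hw).union (Set.finite_singleton i)) ?_
    intro k hk
    simp only [Function.mem_support, Pi.add_apply, xvar] at hk
    by_cases hki : k = i
    · exact Or.inr hki
    · simp only [hki, if_false] at hk
      exact Or.inl (by simpa [Function.mem_support] using by omega)
  · refine Set.Finite.subset (hb.union (Set.finite_singleton i)) ?_
    intro k hk
    simp only [Function.mem_support, Pi.add_apply, xvar] at hk
    by_cases hki : k = i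
    · exact Or.inr hki
    · simp only [hki, if_false] at hk
      exact Or.inl (by simpa [Function.mem_support] using by omega)

lemma mon_of_stGE {u v : ℕ → ℕ} (h : stGE u v) (hv : v ∈ Mon) : u ∈ Mon := by
  induction h with
  | refl => exact hv
  | tail _ hstep ih => exact ih (mon_of_stStep hstep hv)

lemma mon_bound {u : ℕ → ℕ} (hu : u ∈ Mon) : ∃ N, ∀ k, N ≤ k → u k = 0 := by
  obtain ⟨B, hB⟩ := hu.bddAbove
  refine ⟨B + 1, fun k hk => ?_⟩
  by_contra h
  exact absurd (hB (Function.mem_support.2 h)) (by omega)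
noncomputable section

/-- Truncated distance summand. -/
private def Td (u v : ℕ → ℕ) (k : ℕ) : ℕ := (u k - v k) + (v k - u k)

lemma stGE_of_Pf_aux : ∀ (μ N : ℕ) (u v : ℕ → ℕ),
    (∀ k, N ≤ k → u k = 0) → (∀ k, N ≤ k → v k = 0) →
    2 * (∑ k ∈ Finset.range N, u k) + (∑ k ∈ Finset.range N, Td u v k) ≤ μ →
    (∀ j, Pf v j ≤ Pf u j) → stGE u v := by
  intro μ
  induction μ with
  | zero =>
    intro N u v hu hv hμ _
    have hS : ∀ k ∈ Finset.range N, u k = 0 ∧ Td u v k = 0 := by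
      intro k hk
      have h1 : (∑ k ∈ Finset.range N, u k) = 0 := by omega
      have h2 : (∑ k ∈ Finset.range N, Td u v k) = 0 := by omega
      exact ⟨Finset.sum_eq_zero_iff.1 h1 k hk, Finset.sum_eq_zero_iff.1 h2 k hk⟩
    have : u = v := by
      funext k
      by_cases hk : k < N
      · have := hS k (Finset.mem_range.2 hk)
        simp only [Td] at this; omega
      · rw [hu k (by omega), hv k (by omega)]
    rw [this]; exact Relation.ReflTransGen.refl
  | succ μ ih =>
    intro N u v hu hv hμ hdom
    classical
    by_cases huv : u = v
    · rw [huv]; exact Relation.ReflTransGen.refl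
    -- basic sums
    set S := ∑ k ∈ Finset.range N, u k with hSdef
    set Sv := ∑ k ∈ Finset.range N, v k with hSvdef
    have hPfuN : ∀ j, N ≤ j + 1 → Pf u j = S := by
      intro j hj
      rw [hSdef]
      exact (Finset.sum_subset (Finset.range_subset_range.2 hj)
        (fun k _ hk => hu k (by have := Finset.mem_range.not.1 hk; omega))).symm
    have hPfvN : ∀ j, N ≤ j + 1 → Pf v j = Sv := by
      intro j hj
      exact (Finset.sum_subset (Finset.range_subset_range.2 hj)
        (fun k _ hk => hv k (by have := Finset.mem_range.not.1 hk; omega))).symm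
    have hPfu_le : ∀ j, Pf u j ≤ S := fun j =>
      (Pf_mono u (Nat.le_add_right j N)).trans (le_of_eq (hPfuN (j + N) (by omega)))
    have hPfv_le : ∀ j, Pf v j ≤ Sv := fun j =>
      (Pf_mono v (Nat.le_add_right j N)).trans (le_of_eq (hPfvN (j + N) (by omega)))
    have hSvS : Sv ≤ S := by
      have := hdom (N + N); rw [hPfuN _ (by omega), hPfvN _ (by omega)] at this; exact this
    rcases lt_or_eq_of_le hSvS with hlt | heq
    · -- degree case: remove the top variable of u
      have hSpos : 0 < S := by omega
      have hex : ∃ m, m ≤ N ∧ u m ≠ 0 := by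
        by_contra h
        push_neg at h
        have : S = 0 := Finset.sum_eq_zero (fun k hk => by
          by_cases h2 : k ≤ N
          · exact h k h2
          · exact hu k (by omega))
        omega
      obtain ⟨m, hmN, hm⟩ := hex
      set i := Nat.findGreatest (fun k => u k ≠ 0) N with hidef
      have hi : u i ≠ 0 := by
        have := Nat.findGreatest_spec (P := fun k => u k ≠ 0) hmN hm
        simpa [hidef] using this
      have hiN : i < N := by
        by_contra h
        exact hi (hu i (by omega))
      have hgt : ∀ k, i < k → u k = 0 := by
        intro k hk
        by_cases hkN : k ≤ N
        · by_contra h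
          exact absurd (Nat.le_findGreatest (P := fun k => u k ≠ 0) hkN h) (by omega)
        · exact hu k (by omega)
      set u' : ℕ → ℕ := fun k => if k = i then u i - 1 else u k with hu'def
      have hux : u = u' + xvar i := by
        funext k
        simp only [Pi.add_apply, hu'def, xvar]
        by_cases hk : k = i <;> simp [hk] <;> omega
      have hstep : stStep u u' := Or.inr ⟨i, hux⟩
      have hPfu' : ∀ j, Pf u j = Pf u' j + if i ≤ j then 1 else 0 := by
        intro j
        rw [hux, Pf_add, Pf_xvar]
      have hdom' : ∀ j, Pf v j ≤ Pf u' j := by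
        intro j
        by_cases hij : i ≤ j
        · have e1 : Pf u (j + N) = Pf u i := Pf_stab hgt (by omega)
          have e2 : Pf u j = Pf u i := Pf_stab hgt hij
          have e3 : Pf u (j + N) = S := hPfuN _ (by omega)
          have h1 := hPfu' j
          rw [if_pos hij] at h1
          have h2 := hPfv_le j
          omega
        · have h1 := hPfu' j
          rw [if_neg hij] at h1
          have h2 := hdom j
          omega
      have hS' : (∑ k ∈ Finset.range N, u' k) + 1 = S := by
        rw [hSdef]
        conv_rhs => rw [hux]
        simp only [Pi.add_apply]
        rw [Finset.sum_add_distrib]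
        congr 1
        simp only [xvar]
        rw [Finset.sum_ite_eq' (Finset.range N) i (fun _ => 1)]
        simp [Finset.mem_range, hiN]
      have hT : ∑ k ∈ Finset.range N, Td u' v k ≤ (∑ k ∈ Finset.range N, Td u v k) + 1 := by
        have hsplit : ∀ (w : ℕ → ℕ), ∑ k ∈ Finset.range N, Td w v k
            = Td w v i + ∑ k ∈ (Finset.range N).erase i, Td w v k :=
          fun w => (Finset.add_sum_erase _ _ (Finset.mem_range.2 hiN)).symm
        rw [hsplit u, hsplit u']
        have he : ∑ k ∈ (Finset.range N).erase i, Td u' v k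
            = ∑ k ∈ (Finset.range N).erase i, Td u v k := by
          refine Finset.sum_congr rfl (fun k hk => ?_)
          simp only [Td, hu'def]
          rw [if_neg (Finset.mem_erase.1 hk).1]
        rw [he]
        have hi2 : Td u' v i ≤ Td u v i + 1 := by
          simp only [Td, hu'def, if_pos rfl]
          omega
        omega
      refine Relation.ReflTransGen.head hstep (ih N u' v (fun k hk => ?_) hv (by omega) hdom')
      simp only [hu'def]
      rw [if_neg (by omega)]
      exact hu k hk
    · -- equal degree case
      have hexd : ∃ k, u k ≠ v k := by
        by_contra h
        push_neg at h
        exact huv (funext h)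
      set d := Nat.find hexd with hddef
      have hd : u d ≠ v d := Nat.find_spec hexd
      have hdmin : ∀ k, k < d → u k = v k := fun k hk => by
        have := Nat.find_min hexd hk
        omega
      have hdN : d < N := by
        by_contra h
        exact hd (by rw [hu d (by omega), hv d (by omega)])
      have hPfeq : ∀ j, j < d → Pf u j = Pf v j := by
        intro j hj
        exact Finset.sum_congr rfl (fun k hk => hdmin k (by
          have := Finset.mem_range.1 hk; omega))
      have hsum_lt : Pf u d = (∑ k ∈ Finset.range d, u k) + u d := Finset.sum_range_succ u d
      have hsum_lt' : Pf v d = (∑ k ∈ Finset.range d, v k) + v d := Finset.sum_range_succ v d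
      have hrange_eq : (∑ k ∈ Finset.range d, u k) = ∑ k ∈ Finset.range d, v k :=
        Finset.sum_congr rfl (fun k hk => hdmin k (Finset.mem_range.1 hk))
      have hvd : v d < u d := by
        have := hdom d
        omega
      have hexe : ∃ k, d < k ∧ u k < v k := by
        by_contra h
        push_neg at h
        have : Sv < S := by
          refine Finset.sum_lt_sum (fun k hk => ?_) ⟨d, Finset.mem_range.2 hdN, hvd⟩
          rcases lt_trichotomy k d with h1 | h1 | h1
          · exact le_of_eq (hdmin k h1).symm
          · subst h1; exact hvd.le
          · exact h k h1
        omega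
      set e := Nat.find hexe with hedef
      have he : d < e ∧ u e < v e := Nat.find_spec hexe
      have hemin : ∀ k, d < k → k < e → v k ≤ u k := fun k hk1 hk2 => by
        have := Nat.find_min hexe hk2
        omega
      have heN : e < N := by
        by_contra h
        have := hv e (by omega)
        omega
      set w : ℕ → ℕ := fun k => if k = d then u d - 1 else u k with hwdef
      set u' : ℕ → ℕ := w + xvar e with hu'def
      have huw : u = w + xvar d := by
        funext k
        simp only [Pi.add_apply, hwdef, xvar]
        by_cases hk : k = d <;> simp [hk] <;> omega
      have hstep : stStep u u' := Or.inl ⟨d, e, w, he.1.le, huw, rfl⟩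
      have hPfu : ∀ j, Pf u j = Pf w j + if d ≤ j then 1 else 0 := by
        intro j; rw [huw, Pf_add, Pf_xvar]
      have hPfu' : ∀ j, Pf u' j = Pf w j + if e ≤ j then 1 else 0 := by
        intro j; rw [hu'def, Pf_add, Pf_xvar]
      -- interior dominance
      have hint : ∀ t, d + t < e → Pf v (d + t) + 1 ≤ Pf u (d + t) := by
        intro t
        induction t with
        | zero =>
          intro _
          show Pf v d + 1 ≤ Pf u d
          omega
        | succ t iht =>
          intro hlt2
          have h1 : Pf u (d + t + 1) = Pf u (d + t) + u (d + t + 1) := Finset.sum_range_succ u _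
          have h2 : Pf v (d + t + 1) = Pf v (d + t) + v (d + t + 1) := Finset.sum_range_succ v _
          have h3 : v (d + t + 1) ≤ u (d + t + 1) := hemin _ (by omega) (by omega)
          have h4 := iht (by omega)
          have : d + t + 1 = d + (t + 1) := by omega
          rw [this] at h1 h2 h3
          omega
      have hdom' : ∀ j, Pf v j ≤ Pf u' j := by
        intro j
        rcases lt_or_ge j d with hjd | hjd
        · have h1 := hPfu j
          have h2 := hPfu' j
          rw [if_neg (by omega)] at h1
          rw [if_neg (by omega)] at h2
          have := hdom j
          omega
        · rcases lt_or_ge j e with hje | hje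
          · have h1 := hPfu j
            have h2 := hPfu' j
            rw [if_pos hjd] at h1
            rw [if_neg (by omega)] at h2
            have h3 := hint (j - d) (by omega)
            rw [Nat.add_sub_cancel' hjd] at h3
            omega
          · have h1 := hPfu j
            have h2 := hPfu' j
            rw [if_pos hjd] at h1
            rw [if_pos hje] at h2
            have := hdom j
            omega
      have hu'val : ∀ k, u' k = if k = e then u e + 1 else if k = d then u d - 1 else u k := by
        intro k
        simp only [hu'def, Pi.add_apply, hwdef, xvar]
        by_cases hk : k = e
        · subst hk
          rw [if_neg (by omega), if_pos rfl, if_pos rfl]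
        · rw [if_neg hk, if_neg hk, add_zero]
      have hS' : (∑ k ∈ Finset.range N, u' k) = S := by
        have h1 : (∑ k ∈ Finset.range N, u' k) = (∑ k ∈ Finset.range N, w k) + 1 := by
          rw [hu'def]
          simp only [Pi.add_apply]
          rw [Finset.sum_add_distrib]
          congr 1
          simp only [xvar]
          rw [Finset.sum_ite_eq' (Finset.range N) e (fun _ => 1)]
          simp [Finset.mem_range, heN]
        have h2 : S = (∑ k ∈ Finset.range N, w k) + 1 := by
          rw [hSdef]
          conv_lhs => rw [huw]
          simp only [Pi.add_apply]
          rw [Finset.sum_add_distrib]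
          congr 1
          simp only [xvar]
          rw [Finset.sum_ite_eq' (Finset.range N) d (fun _ => 1)]
          simp [Finset.mem_range, hdN]
        omega
      have hT : ∑ k ∈ Finset.range N, Td u' v k < ∑ k ∈ Finset.range N, Td u v k := by
        refine Finset.sum_lt_sum (fun k hk => ?_) ⟨d, Finset.mem_range.2 hdN, ?_⟩
        · rw [Td, Td, hu'val k]
          by_cases hk1 : k = e
          · subst hk1
            rw [if_pos rfl]
            have := he.2
            omega
          · rw [if_neg hk1]
            by_cases hk2 : k = d
            · subst hk2
              rw [if_pos rfl]
              omega
            · rw [if_neg hk2]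
        · rw [Td, Td, hu'val d]
          rw [if_neg (by omega), if_pos rfl]
          omega
      refine Relation.ReflTransGen.head hstep (ih N u' v (fun k hk => ?_) hv (by omega) hdom')
      rw [hu'val k, if_neg (by omega), if_neg (by omega)]
      exact hu k hk
noncomputable section

/-- The number of indices `i` with `f i ≤ j`, for a monotone large map. -/
def cnt (f : NNhat) (j : ℕ) : ℕ := sInf {i | ¬ f i ≤ (j : ℕ∞)}

lemma cnt_iff {f : NNhat} (mf : Monotone f) (lf : LargeMap f) (j i : ℕ) :
    f i ≤ (j : ℕ∞) ↔ i < cnt f j := by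
  obtain ⟨n, hn⟩ := lf
  have hne : {i | ¬ f i ≤ (j : ℕ∞)}.Nonempty := ⟨n, by simp [hn]⟩
  constructor
  · intro h
    by_contra hlt
    push_neg at hlt
    exact (Nat.sInf_mem hne) ((mf hlt).trans h)
  · intro h
    by_contra hf
    have h2 := Nat.sInf_le (show i ∈ {i | ¬ f i ≤ (j:ℕ∞)} from hf)
    rw [cnt] at h
    omega

lemma cnt_mono {f : NNhat} (mf : Monotone f) (lf : LargeMap f) {j j' : ℕ} (h : j ≤ j') :
    cnt f j ≤ cnt f j' := by
  by_contra hlt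
  push_neg at hlt
  have h1 : f (cnt f j') ≤ (j : ℕ∞) := (cnt_iff mf lf j _).2 hlt
  have h2 : ¬ f (cnt f j') ≤ (j' : ℕ∞) := by
    intro h2
    have := (cnt_iff mf lf j' _).1 h2
    omega
  exact h2 (h1.trans (by exact_mod_cast Nat.cast_le.2 h))

lemma le_iff_cnt {f g : NNhat} (mf : Monotone f) (lf : LargeMap f)
    (mg : Monotone g) (lg : LargeMap g) :
    (∀ n, f n ≤ g n) ↔ ∀ j, cnt g j ≤ cnt f j := by
  constructor
  · intro h j
    by_contra hlt
    push_neg at hlt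
    have h1 : g (cnt f j) ≤ (j : ℕ∞) := (cnt_iff mg lg j _).2 hlt
    have h2 : f (cnt f j) ≤ (j : ℕ∞) := (h _).trans h1
    have := (cnt_iff mf lf j _).1 h2
    omega
  · intro h n
    rcases eq_or_ne (g n) ⊤ with hg | hg
    · rw [hg]; exact le_top
    · lift g n to ℕ using hg with j hj
      have h1 : g n ≤ (j : ℕ∞) := le_of_eq hj.symm
      have h2 : n < cnt g j := (cnt_iff mg lg j n).1 h1
      have h3 : n < cnt f j := lt_of_lt_of_le h2 (h j)
      exact (cnt_iff mf lf j n).2 h3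

lemma gmap_zero {f : NNhat} (mf : Monotone f) (lf : LargeMap f) :
    Gmap f 0 = cnt f 0 := by
  have hset : {i : ℕ | f i = ((0 : ℕ) : ℕ∞)} = Set.Iio (cnt f 0) := by
    ext i
    simp only [Set.mem_setOf_eq, Set.mem_Iio]
    rw [← cnt_iff mf lf 0 i]
    constructor
    · intro h; rw [h]
    · intro h; exact le_antisymm h (by simp)
  calc Gmap f 0 = Nat.card (Set.Iio (cnt f 0)) := by rw [Gmap, ← hset]; rfl
    _ = cnt f 0 := by simp

lemma gmap_succ {f : NNhat} (mf : Monotone f) (lf : LargeMap f) (j : ℕ) :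
    Gmap f (j+1) = cnt f (j+1) - cnt f j := by
  have hset : {i : ℕ | f i = (((j:ℕ)+1 : ℕ) : ℕ∞)} = Set.Ico (cnt f j) (cnt f (j+1)) := by
    ext i
    simp only [Set.mem_setOf_eq, Set.mem_Ico]
    rw [← cnt_iff mf lf (j+1) i]
    constructor
    · intro h
      refine ⟨?_, le_of_eq h⟩
      by_contra hlt
      push_neg at hlt
      have h1 : f i ≤ (j : ℕ∞) := (cnt_iff mf lf j i).2 hlt
      rw [h] at h1
      exact absurd (by exact_mod_cast h1) (by omega)
    · rintro ⟨h1, h2⟩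
      have h3 : ¬ f i ≤ (j : ℕ∞) := by
        intro h3
        have := (cnt_iff mf lf j i).1 h3
        omega
      push_neg at h3
      have h4 : ((j:ℕ∞) + 1) ≤ f i := ENat.add_one_le_iff (by simp) |>.2 h3
      refine le_antisymm h2 ?_
      exact_mod_cast (by push_cast; exact h4 : (((j+1:ℕ)):ℕ∞) ≤ f i)
  calc Gmap f (j+1) = Nat.card (Set.Ico (cnt f j) (cnt f (j+1))) := by rw [Gmap, ← hset]; rfl
    _ = cnt f (j+1) - cnt f j := by simp

lemma Pf_gmap {f : NNhat} (mf : Monotone f) (lf : LargeMap f) (j : ℕ) :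
    Pf (Gmap f) j = cnt f j := by
  induction j with
  | zero => rw [Pf, Finset.sum_range_one, gmap_zero mf lf]
  | succ j ih =>
    have h1 : Pf (Gmap f) (j+1) = Pf (Gmap f) j + Gmap f (j+1) := Finset.sum_range_succ _ _
    rw [h1, ih, gmap_succ mf lf]
    have := cnt_mono mf lf (show j ≤ j + 1 by omega)
    omega

lemma gmap_mon {f : NNhat} (mf : Monotone f) (lf : LargeMap f) : Gmap f ∈ Mon := by
  obtain ⟨n, hn⟩ := lf
  refine Set.Finite.subset (Set.Finite.image (fun i => (f i).toNat) (Set.finite_Iio n)) ?_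
  intro j hj
  simp only [Function.mem_support] at hj
  have : Nonempty {i : ℕ // f i = (j : ℕ∞)} := by
    rcases Nat.card_ne_zero.1 (by exact hj) with ⟨h, _⟩
    exact h
  obtain ⟨i, hi⟩ := this
  refine ⟨i, ?_, by show (f i).toNat = j; rw [hi]; simp⟩
  simp only [Set.mem_Iio]
  by_contra h
  push_neg at h
  have : f i = ⊤ := top_le_iff.1 (hn ▸ mf h)
  rw [hi] at this
  exact (ENat.coe_ne_top j) this

/-- The inverse of `Gmap`: the large monotone map with sorted values given by `v`. -/
def invG (v : ℕ → ℕ) : NNhat := fun i =>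
  sInf ((fun j : ℕ => (j : ℕ∞)) '' {j : ℕ | i < Pf v j})

lemma invG_le_iff (v : ℕ → ℕ) (i j : ℕ) : invG v i ≤ (j : ℕ∞) ↔ i < Pf v j := by
  constructor
  · intro h
    rcases Set.eq_empty_or_nonempty {j' : ℕ | i < Pf v j'} with he | ⟨m0, hm0⟩
    · rw [invG, he] at h
      simp only [Set.image_empty, sInf_empty] at h
      exact absurd h (by simp)
    · set T := {j' : ℕ | i < Pf v j'}
      have hmem : (((sInf T : ℕ)) : ℕ∞) ∈ (fun j : ℕ => (j : ℕ∞)) '' T :=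
        ⟨sInf T, Nat.sInf_mem ⟨m0, hm0⟩, rfl⟩
      have hle : invG v i = (((sInf T : ℕ)) : ℕ∞) := by
        refine le_antisymm (sInf_le hmem) ?_
        refine le_sInf ?_
        rintro x ⟨j', hj', rfl⟩
        exact_mod_cast Nat.cast_le.2 (Nat.sInf_le hj')
      rw [hle] at h
      have hmj : sInf T ≤ j := by exact_mod_cast h
      have : i < Pf v (sInf T) := Nat.sInf_mem (⟨m0, hm0⟩ : T.Nonempty)
      exact lt_of_lt_of_le this (Pf_mono v hmj)
  · intro h
    exact sInf_le ⟨j, h, rfl⟩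

lemma invG_monotone (v : ℕ → ℕ) : Monotone (invG v) := by
  intro i i' h
  refine le_sInf ?_
  rintro x ⟨j, hj, rfl⟩
  exact sInf_le ⟨j, by simp only [Set.mem_setOf_eq] at hj ⊢; omega, rfl⟩

lemma invG_large {v : ℕ → ℕ} (hv : v ∈ Mon) : LargeMap (invG v) := by
  obtain ⟨N, hN⟩ := mon_bound hv
  refine ⟨Pf v N, ?_⟩
  have hPle : ∀ j, Pf v j ≤ Pf v N := by
    intro j
    rcases le_or_gt j N with h | h
    · exact Pf_mono v h
    · exact le_of_eq (Pf_stab (fun k hk => hN k (by omega)) h.le)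
  have : {j : ℕ | Pf v N < Pf v j} = ∅ := by
    ext j
    simp only [Set.mem_setOf_eq, Set.mem_empty_iff_false, iff_false, not_lt]
    exact hPle j
  rw [invG, this]
  simp

lemma cnt_invG {v : ℕ → ℕ} (j : ℕ) (hv : v ∈ Mon) : cnt (invG v) j = Pf v j := by
  have h1 : ∀ i, invG v i ≤ (j:ℕ∞) ↔ i < cnt (invG v) j :=
    fun i => cnt_iff (invG_monotone v) (invG_large hv) j i
  have h2 : ∀ i, invG v i ≤ (j:ℕ∞) ↔ i < Pf v j := fun i => invG_le_iff v i j
  by_contra hne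
  rcases Nat.lt_or_ge (cnt (invG v) j) (Pf v j) with h | h
  · have := (h1 _).1 ((h2 _).2 h)
    omega
  · have hlt : Pf v j < cnt (invG v) j := by omega
    have := (h2 _).1 ((h1 _).2 hlt)
    omega

lemma gmap_invG {v : ℕ → ℕ} (hv : v ∈ Mon) : Gmap (invG v) = v := by
  funext j
  cases j with
  | zero =>
    rw [gmap_zero (invG_monotone v) (invG_large hv), cnt_invG 0 hv, Pf, Finset.sum_range_one]
  | succ j =>
    rw [gmap_succ (invG_monotone v) (invG_large hv), cnt_invG (j+1) hv, cnt_invG j hv]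
    have : Pf v (j+1) = Pf v j + v (j+1) := Finset.sum_range_succ _ _
    omega
noncomputable section

lemma homle_iff (f g : HomNN) : f ≤ g ↔ ∀ n, f.1 n ≤ g.1 n := Iff.rfl

lemma le_iff_stGE {f g : HomNN} (lf : LargeMap f.1) (lg : LargeMap g.1) :
    f ≤ g ↔ stGE (Gmap f.1) (Gmap g.1) := by
  constructor
  · intro h
    have hc : ∀ j, cnt g.1 j ≤ cnt f.1 j :=
      (le_iff_cnt f.2 lf g.2 lg).1 ((homle_iff f g).1 h)
    have h1 : ∀ j, Pf (Gmap g.1) j ≤ Pf (Gmap f.1) j := by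
      intro j
      rw [Pf_gmap g.2 lg, Pf_gmap f.2 lf]
      exact hc j
    obtain ⟨N1, hN1⟩ := mon_bound (gmap_mon f.2 lf)
    obtain ⟨N2, hN2⟩ := mon_bound (gmap_mon g.2 lg)
    exact stGE_of_Pf_aux _ (max N1 N2) _ _
      (fun k hk => hN1 k (le_trans (le_max_left _ _) hk))
      (fun k hk => hN2 k (le_trans (le_max_right _ _) hk)) le_rfl h1
  · intro h
    have h1 := stGE_Pf h
    have hc : ∀ j, cnt g.1 j ≤ cnt f.1 j := by
      intro j
      rw [← Pf_gmap g.2 lg, ← Pf_gmap f.2 lf]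
      exact h1 j
    exact (homle_iff f g).2 ((le_iff_cnt f.2 lf g.2 lg).2 hc)

def topHom : HomNN := ⟨fun _ => ⊤, monotone_const⟩

lemma topHom_large : LargeMap topHom.1 := ⟨0, rfl⟩

lemma le_topHom (f : HomNN) : f ≤ topHom := (homle_iff _ _).2 (fun _ => le_top)

/-- The generating set of the topology. -/
def gens : Set (Set HomNN) :=
  {S | ∃ a b : HomNN, SmallMap a.1 ∧ LargeMap b.1 ∧ S = {f : HomNN | a ≤ f ∧ f ≤ b}}

lemma isOpen_iff_gen {S : Set HomNN} : IsOpen S ↔ TopologicalSpace.GenerateOpen gens S :=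
  Iff.rfl

lemma open_exists_large {S : Set HomNN} (hS : IsOpen S) :
    ∀ f ∈ S, ∃ b : HomNN, LargeMap b.1 ∧ f ≤ b ∧ Set.Icc f b ⊆ S := by
  have h : TopologicalSpace.GenerateOpen gens S := hS
  clear hS
  induction h with
  | basic s hs =>
    obtain ⟨a, b, _, hb, rfl⟩ := hs
    intro f hf
    exact ⟨b, hb, hf.2, fun g hg => ⟨le_trans hf.1 hg.1, hg.2⟩⟩
  | univ =>
    intro f _
    exact ⟨topHom, topHom_large, le_topHom f, fun _ _ => trivial⟩
  | inter s t _ _ ihs iht =>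
    intro f hf
    obtain ⟨b1, hb1, hfb1, hIcc1⟩ := ihs f hf.1
    obtain ⟨b2, hb2, hfb2, hIcc2⟩ := iht f hf.2
    refine ⟨⟨fun n => min (b1.1 n) (b2.1 n), fun m n h => min_le_min (b1.2 h) (b2.2 h)⟩, ?_, ?_, ?_⟩
    · obtain ⟨n1, hn1⟩ := hb1
      obtain ⟨n2, hn2⟩ := hb2
      refine ⟨max n1 n2, ?_⟩
      have e1 : b1.1 (max n1 n2) = ⊤ := top_le_iff.1 (hn1 ▸ b1.2 (le_max_left _ _))
      have e2 : b2.1 (max n1 n2) = ⊤ := top_le_iff.1 (hn2 ▸ b2.2 (le_max_right _ _))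
      simp [e1, e2]
    · exact (homle_iff _ _).2 fun n => le_min (hfb1 n) (hfb2 n)
    · intro g hg
      refine ⟨hIcc1 ⟨hg.1, ?_⟩, hIcc2 ⟨hg.1, ?_⟩⟩
      · exact (homle_iff _ _).2 fun n => le_trans (hg.2 n) (min_le_left _ _)
      · exact (homle_iff _ _).2 fun n => le_trans (hg.2 n) (min_le_right _ _)
  | sUnion σ _ ih =>
    intro f hf
    obtain ⟨s, hsσ, hfs⟩ := hf
    obtain ⟨b, hb, hfb, hIcc⟩ := ih s hsσ f hfs
    exact ⟨b, hb, hfb, fun g hg => ⟨s, hsσ, hIcc hg⟩⟩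

lemma lower_open_above {ℐ : Set HomNN} (hopen : IsOpen ℐ) :
    ∀ f ∈ ℐ, ∃ b ∈ ℐ, LargeMap b.1 ∧ f ≤ b := by
  intro f hf
  obtain ⟨b, hb, hfb, hIcc⟩ := open_exists_large hopen f hf
  exact ⟨b, hIcc ⟨hfb, le_rfl⟩, hb, hfb⟩

-- ℕ∞ interval opens
lemma enat_isOpen_Iic (x : ℕ∞) : IsOpen (Set.Iic x) := by
  rcases eq_or_ne x ⊤ with rfl | hx
  · simp
  · lift x to ℕ using hx
    have : Set.Iic (x:ℕ∞) = ⋃ m ∈ Set.Iic x, {(m:ℕ∞)} := by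
      ext y
      simp only [Set.mem_Iic, Set.mem_iUnion, Set.mem_singleton_iff]
      constructor
      · intro h
        lift y to ℕ using LT.lt.ne (lt_of_le_of_lt h (by exact_mod_cast lt_top_iff_ne_top.2 (by simp)))
        exact ⟨y, by exact_mod_cast h, rfl⟩
      · rintro ⟨m, hm, rfl⟩
        exact_mod_cast hm
    rw [this]
    exact isOpen_biUnion fun m _ => ENat.isOpen_singleton (by simp)

lemma enat_isOpen_Ici {x : ℕ∞} (hx : x ≠ ⊤) : IsOpen (Set.Ici x) := by
  lift x to ℕ using hx
  have hcl : IsClosed (Set.Iio (x:ℕ∞)) := by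
    have : Set.Iio (x:ℕ∞) = ⋃ m ∈ Set.Iio x, {(m:ℕ∞)} := by
      ext y
      simp only [Set.mem_Iio, Set.mem_iUnion, Set.mem_singleton_iff]
      constructor
      · intro h
        lift y to ℕ using (h.trans_le le_top).ne
        exact ⟨y, by exact_mod_cast h, rfl⟩
      · rintro ⟨m, hm, rfl⟩
        exact_mod_cast hm
    rw [this]
    exact (Set.finite_Iio x).isClosed_biUnion fun m _ => isClosed_singleton
  simpa using hcl.isOpen_compl

lemma small_eventually_const {a : NNhat} (ma : Monotone a) (ha : SmallMap a) :
    ∃ n₀, ∀ n, n₀ ≤ n → a n = a n₀ := by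
  obtain ⟨N, hN⟩ := ha
  have hne : ∀ n, a n ≠ ⊤ := fun n => (lt_of_le_of_lt (hN n) (by exact_mod_cast lt_top_iff_ne_top.2 (by simp))).ne
  set g : ℕ → ℕ := fun n => (a n).toNat with hg
  have hcoe : ∀ n, a n = (g n : ℕ∞) := fun n => (ENat.coe_toNat (hne n)).symm
  have hbdd : BddAbove (Set.range g) := by
    refine ⟨N, ?_⟩
    rintro y ⟨n, rfl⟩
    have := hN n
    rw [hcoe n] at this
    exact_mod_cast this
  obtain ⟨n₀, hn₀⟩ := Nat.sSup_mem (Set.range_nonempty g) hbdd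
  refine ⟨n₀, fun n hn => ?_⟩
  rw [hcoe n, hcoe n₀]
  norm_cast
  refine le_antisymm ?_ ?_
  · rw [hn₀]
    exact le_csSup hbdd ⟨n, rfl⟩
  · have := ma hn
    rw [hcoe n, hcoe n₀] at this
    exact_mod_cast this
noncomputable section

lemma isOpen_le_set {b : NNhat} (mb : Monotone b) (lb : LargeMap b) :
    IsOpen {g : NNhat | ∀ n, g n ≤ b n} := by
  obtain ⟨n₁, hn₁⟩ := lb
  have hset : {g : NNhat | ∀ n, g n ≤ b n} = ⋂ n ∈ Finset.range n₁, {g : NNhat | g n ≤ b n} := by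
    ext g
    simp only [Set.mem_setOf_eq, Set.mem_iInter, Finset.mem_range]
    constructor
    · intro h n _
      exact h n
    · intro h n
      rcases lt_or_ge n n₁ with hn | hn
      · exact h n hn
      · have : b n = ⊤ := top_le_iff.1 (hn₁ ▸ mb hn)
        rw [this]
        exact le_top
  rw [hset]
  refine isOpen_biInter_finset fun n _ => ?_
  show IsOpen ((fun g : NNhat => g n) ⁻¹' Set.Iic (b n))
  exact (continuous_apply n).isOpen_preimage _ (enat_isOpen_Iic (b n))

lemma generator_preimage {a b : HomNN} (ha : SmallMap a.1) (hb : LargeMap b.1) :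
    ∃ V : Set NNhat, IsOpen V ∧ {f : HomNN | a ≤ f ∧ f ≤ b} = Subtype.val ⁻¹' V := by
  obtain ⟨n₀, hconst⟩ := small_eventually_const a.2 ha
  obtain ⟨N, hN⟩ := ha
  refine ⟨(⋂ n ∈ Finset.range (n₀+1), {g : NNhat | a.1 n ≤ g n}) ∩ {g : NNhat | ∀ n, g n ≤ b.1 n},
    ?_, ?_⟩
  · refine IsOpen.inter ?_ (isOpen_le_set b.2 hb)
    refine isOpen_biInter_finset fun n _ => ?_
    have hne : a.1 n ≠ ⊤ := (lt_of_le_of_lt (hN n) (by exact_mod_cast lt_top_iff_ne_top.2 (by simp))).ne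
    show IsOpen ((fun g : NNhat => g n) ⁻¹' Set.Ici (a.1 n))
    exact (continuous_apply n).isOpen_preimage _ (enat_isOpen_Ici hne)
  · ext f
    simp only [Set.mem_setOf_eq, Set.mem_preimage, Set.mem_inter_iff, Set.mem_iInter,
      Finset.mem_range]
    constructor
    · intro ⟨h1, h2⟩
      exact ⟨fun n _ => h1 n, fun n => h2 n⟩
    · intro ⟨h1, h2⟩
      refine ⟨(homle_iff _ _).2 fun n => ?_, (homle_iff _ _).2 fun n => h2 n⟩
      rcases lt_or_ge n (n₀+1) with hn | hn
      · exact h1 n hn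
      · calc a.1 n = a.1 n₀ := hconst n (by omega)
          _ ≤ f.1 n₀ := h1 n₀ (by omega)
          _ ≤ f.1 n := f.2 (by omega)

lemma ours_open_ambient {S : Set HomNN} (hS : IsOpen S) :
    ∃ V : Set NNhat, IsOpen V ∧ S = Subtype.val ⁻¹' V := by
  have h : TopologicalSpace.GenerateOpen gens S := hS
  clear hS
  induction h with
  | basic s hs =>
    obtain ⟨a, b, ha, hb, rfl⟩ := hs
    exact generator_preimage ha hb
  | univ => exact ⟨Set.univ, isOpen_univ, by simp⟩
  | inter s t _ _ ihs iht =>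
    obtain ⟨V1, hV1, rfl⟩ := ihs
    obtain ⟨V2, hV2, rfl⟩ := iht
    exact ⟨V1 ∩ V2, hV1.inter hV2, rfl⟩
  | sUnion σ _ ih =>
    choose V hVopen hVeq using ih
    refine ⟨⋃ (s : Set HomNN) (h : s ∈ σ), V s h, isOpen_iUnion fun s => isOpen_iUnion fun h => hVopen s h, ?_⟩
    rw [Set.sUnion_eq_biUnion]
    rw [Set.preimage_iUnion₂]
    exact Set.iUnion₂_congr hVeq

lemma monotone_set_compact : IsCompact {g : NNhat | Monotone g} := by
  have hcl : IsClosed {g : NNhat | Monotone g} := by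
    have : {g : NNhat | Monotone g} = ⋂ p : ℕ × ℕ, {g : NNhat | p.1 ≤ p.2 → g p.1 ≤ g p.2} := by
      ext g
      simp only [Set.mem_setOf_eq, Set.mem_iInter]
      exact ⟨fun h p hp => h hp, fun h i j hij => h (i, j) hij⟩
    rw [this]
    refine isClosed_iInter fun p => ?_
    by_cases hp : p.1 ≤ p.2
    · simp only [hp, true_implies]
      exact isClosed_le (continuous_apply p.1) (continuous_apply p.2)
    · simp only [hp, false_implies]
      exact isClosed_univ.mono (by simp) |>.mono (le_refl _) |>.mono (le_refl _)
  exact hcl.isCompact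

lemma exists_finite_dominating {ℐ : Set HomNN} (hopen : IsOpen ℐ) (hlower : IsLowerSet ℐ)
    (hclosed : IsClosed ℐ) :
    ∃ B : Finset HomNN, (∀ b ∈ B, b ∈ ℐ ∧ LargeMap b.1) ∧ ∀ f ∈ ℐ, ∃ b ∈ B, f ≤ b := by
  classical
  obtain ⟨V, hVopen, hVeq⟩ := ours_open_ambient hclosed.isOpen_compl
  have hIeq : ℐ = Subtype.val ⁻¹' Vᶜ := by
    rw [Set.preimage_compl, ← hVeq, compl_compl]
  have hKcomp : IsCompact (Subtype.val '' ℐ) := by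
    have himg : Subtype.val '' ℐ = {g : NNhat | Monotone g} ∩ Vᶜ := by
      rw [hIeq, Set.image_preimage_eq_inter_range, Subtype.range_coe_subtype]
      exact Set.inter_comm _ _
    rw [himg]
    exact monotone_set_compact.inter_right hVopen.isClosed_compl
  set ι := {b : HomNN // b ∈ ℐ ∧ LargeMap b.1} with hι
  set W : ι → Set NNhat := fun b => {g | ∀ n, g n ≤ b.1.1 n} with hW
  have hWopen : ∀ b : ι, IsOpen (W b) := fun b => isOpen_le_set b.1.2 b.2.2
  have hcover : Subtype.val '' ℐ ⊆ ⋃ b : ι, W b := by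
    rintro g ⟨f, hf, rfl⟩
    obtain ⟨b₀, hb₀I, hb₀L, hfb₀⟩ := lower_open_above hopen f hf
    exact Set.mem_iUnion.2 ⟨⟨b₀, hb₀I, hb₀L⟩, fun n => hfb₀ n⟩
  obtain ⟨t, ht⟩ := hKcomp.elim_finite_subcover W hWopen hcover
  refine ⟨t.image (fun b => b.1), ?_, ?_⟩
  · intro b hb
    obtain ⟨c, _, rfl⟩ := Finset.mem_image.1 hb
    exact c.2
  · intro f hf
    have : f.1 ∈ ⋃ b ∈ t, W b := ht ⟨f, hf, rfl⟩
    obtain ⟨b, hbt, hfb⟩ := Set.mem_iUnion₂.1 this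
    exact ⟨b.1, Finset.mem_image.2 ⟨b, hbt, rfl⟩, (homle_iff _ _).2 hfb⟩
noncomputable section

/-- an open poset ideal `ℐ` is also closed iff the corresponding
strongly stable ideal `Γ(ℐ^L)` is finitely generated. -/
theorem stmt7 (ℐ : Set HomNN) (hopen : IsOpen ℐ) (hlower : IsLowerSet ℐ) :
    IsClosed ℐ ↔
      ∃ M : Set (ℕ → ℕ), M.Finite ∧ M ⊆ Mon ∧ GammaIdeal ℐ = sstSpan M := by
  classical
  constructor
  · intro hclosed
    obtain ⟨B, hB1, hB2⟩ := exists_finite_dominating hopen hlower hclosed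
    refine ⟨↑(B.image (fun b => Gmap b.1)), (B.image _).finite_toSet, ?_, ?_⟩
    · intro u hu
      obtain ⟨b, hbB, rfl⟩ := Finset.mem_image.1 hu
      exact gmap_mon b.2 (hB1 b hbB).2
    · ext v
      constructor
      · rintro ⟨f, hf, hlf, rfl⟩
        obtain ⟨b, hbB, hfb⟩ := hB2 f hf
        exact ⟨Gmap b.1, Finset.mem_coe.2 (Finset.mem_image.2 ⟨b, hbB, rfl⟩),
          (le_iff_stGE hlf (hB1 b hbB).2).1 hfb⟩
      · rintro ⟨u, huM, hst⟩
        obtain ⟨b, hbB, rfl⟩ := Finset.mem_image.1 (Finset.mem_coe.1 huM)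
        have hvMon : v ∈ Mon := mon_of_stGE hst (gmap_mon b.2 (hB1 b hbB).2)
        refine ⟨⟨invG v, invG_monotone v⟩, ?_, invG_large hvMon, (gmap_invG hvMon).symm⟩
        have hfb : (⟨invG v, invG_monotone v⟩ : HomNN) ≤ b := by
          refine (le_iff_stGE (invG_large hvMon) (hB1 b hbB).2).2 ?_
          show stGE (Gmap (invG v)) (Gmap b.1)
          rw [gmap_invG hvMon]
          exact hst
        exact hlower hfb (hB1 b hbB).1
  · rintro ⟨M, hMfin, _, hMeq⟩
    have hMsub : ∀ u ∈ M, ∃ b : HomNN, b ∈ ℐ ∧ LargeMap b.1 ∧ Gmap b.1 = u := by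
      intro u hu
      have : u ∈ GammaIdeal ℐ := by
        rw [hMeq]
        exact ⟨u, hu, Relation.ReflTransGen.refl⟩
      obtain ⟨f, hf, hlf, hfe⟩ := this
      exact ⟨f, hf, hlf, hfe.symm⟩
    choose bb hbI hbL hbG using hMsub
    have hdown : ∀ g ∈ ℐ, ∃ u, ∃ hu : u ∈ M, g ≤ bb u hu := by
      intro g hg
      obtain ⟨h, hhI, hhL, hgh⟩ := lower_open_above hopen g hg
      have hmem : Gmap h.1 ∈ sstSpan M := by
        rw [← hMeq]
        exact ⟨h, hhI, hhL, rfl⟩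
      obtain ⟨u, huM, hst⟩ := hmem
      refine ⟨u, huM, hgh.trans ?_⟩
      refine (le_iff_stGE hhL (hbL u huM)).2 ?_
      rw [hbG u huM]
      exact hst
    rw [← isOpen_compl_iff]
    have hunion : ℐᶜ = ⋃ a : {a : HomNN // SmallMap a.1 ∧ a ∉ ℐ},
        {f : HomNN | a.1 ≤ f ∧ f ≤ topHom} := by
      ext f
      simp only [Set.mem_compl_iff, Set.mem_iUnion, Set.mem_setOf_eq]
      constructor
      · intro hf
        -- construct the small truncation of f
        have hnle : ∀ u, ∀ hu : u ∈ M, ∃ n, (bb u hu).1 n < f.1 n := by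
          intro u hu
          by_contra hle
          push_neg at hle
          exact hf (hlower ((homle_iff _ _).2 hle) (hbI u hu))
        choose nn hnn using hnle
        set T : Finset ℕ := hMfin.toFinset.attach.image
          (fun u => ((bb u.1 (hMfin.mem_toFinset.1 u.2)).1
            (nn u.1 (hMfin.mem_toFinset.1 u.2))).toNat) with hT
        set N : ℕ := 1 + T.sup id with hNdef
        set a : HomNN := ⟨fun n => min (f.1 n) (N : ℕ∞),
          fun m n h => min_le_min (f.2 h) le_rfl⟩ with ha
        have haf : a ≤ f := (homle_iff _ _).2 fun n => min_le_left _ _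
        have hasmall : SmallMap a.1 := ⟨N, fun n => min_le_right _ _⟩
        have hanotin : a ∉ ℐ := by
          intro haI
          obtain ⟨u, hu, hab⟩ := hdown a haI
          set n := nn u hu with hn
          have h1 : (bb u hu).1 n < f.1 n := hnn u hu
          have hne : (bb u hu).1 n ≠ ⊤ := (h1.trans_le le_top).ne
          set k : ℕ := ((bb u hu).1 n).toNat with hk
          have hkval : (bb u hu).1 n = (k : ℕ∞) := (ENat.coe_toNat hne).symm
          have hkT : k ∈ T := Finset.mem_image.2
            ⟨⟨u, hMfin.mem_toFinset.2 hu⟩, Finset.mem_attach _ _, rfl⟩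
          have hkN : k + 1 ≤ N := by
            have := Finset.le_sup (f := id) hkT
            simp only [id] at this
            omega
          have hfk : (k : ℕ∞) + 1 ≤ f.1 n := ENat.add_one_le_iff (by simp) |>.2 (hkval ▸ h1)
          have haN : (k : ℕ∞) + 1 ≤ (N : ℕ∞) := by
            exact_mod_cast hkN
          have han : (k : ℕ∞) + 1 ≤ a.1 n := le_min hfk haN
          have := hab n
          rw [hkval] at this
          have hcon : (k : ℕ∞) + 1 ≤ (k : ℕ∞) := han.trans this
          norm_cast at hcon
          omega
        exact ⟨⟨a, hasmall, hanotin⟩, haf, le_topHom f⟩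
      · rintro ⟨a, haf, -⟩
        intro hfI
        exact a.2.2 (hlower haf hfI)
    rw [hunion]
    refine isOpen_iUnion fun a => ?_
    exact TopologicalSpace.GenerateOpen.basic _ ⟨a.1, topHom, a.2.1, topHom_large, rfl⟩

end
end
end
end
end
end
end
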